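/- Let p₁ and p₂ be distinct odd primes and n₁, n₂ positive integers, and set n = p₁^{n₁}·p₂^{n₂}. Then the unit graph G(Z_n) has n vertices and exactly (n - 1)·φ(n)/2 edges, its minimum degree equals φ(n) - 1, and its edge connectivity equals φ(n) - 1; that is, there exists a set of φ(n) - 1 edges whose deletion leaves a graph that is not connected, while deleting any set of fewer than φ(n) - 1 edges leaves a connected graph. -/

import Mathlib

open Finset

/-- The unit graph of `ZMod m`: distinct vertices `x, y` are adjacent iff `x + y` is a unit. -/
def unitGraph (m : ℕ) : SimpleGraph (ZMod m) where
  Adj x y := x ≠ y ∧ IsUnit (x + y)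
  symm := by
    constructor
    intro x y h
    exact ⟨h.1.symm, by rw [add_comm]; exact h.2⟩
  loopless := by
    constructor
    intro x h
    exact h.1 rfl

noncomputable def myUnitsEquiv (M : Type*) [Monoid M] : Mˣ ≃ {x : M // IsUnit x} where
  toFun u := ⟨u, u.isUnit⟩
  invFun s := s.2.unit
  left_inv _ := Units.ext rfl
  right_inv s := Subtype.ext s.2.unit_spec

lemma card_filter_isUnit (n : ℕ) [NeZero n] :
    (univ.filter (fun x : ZMod n => IsUnit x)).card = n.totient := by
  classical
  rw [← Fintype.card_subtype, ← ZMod.card_units_eq_totient n]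
  exact (Fintype.card_congr (myUnitsEquiv (ZMod n))).symm

lemma card_filter_unit_add (n : ℕ) [NeZero n] (v : ZMod n) :
    (univ.filter (fun y : ZMod n => IsUnit (v + y))).card = n.totient := by
  classical
  rw [← card_filter_isUnit n]
  apply Finset.card_bij' (fun y _ => v + y) (fun u _ => u - v)
  · intro a ha; simp only [mem_filter, mem_univ, true_and] at ha ⊢; exact ha
  · intro a ha; simp only [mem_filter, mem_univ, true_and] at ha ⊢
    simpa using ha
  · intro a _; ring
  · intro a _; ring

lemma cross_card_bound {V : Type*} [Fintype V] [DecidableEq V] (G : SimpleGraph V)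
    [DecidableRel G.Adj] (δ : ℕ) (hdeg : ∀ v, δ ≤ G.degree v)
    (A : Finset V) (hA : A.Nonempty) (S : Finset (Sym2 V))
    (hcross : ∀ u v, u ∈ A → v ∉ A → G.Adj u v → s(u, v) ∈ S)
    (hall : ∀ u ∈ A, ∃ v, v ∉ A ∧ G.Adj u v) : δ ≤ S.card := by
  classical
  set D : Finset (V × V) := (A ×ˢ Aᶜ).filter (fun p => G.Adj p.1 p.2) with hD
  have hDS : D.card ≤ S.card := by
    apply Finset.card_le_card_of_injOn (fun p => s(p.1, p.2))
    · intro p hp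
      have hp : p ∈ D := hp
      simp only [hD, mem_filter, mem_product, mem_compl] at hp
      exact hcross _ _ hp.1.1 hp.1.2 hp.2
    · intro p hp q hq hpq
      simp only [hD, coe_filter, Set.mem_setOf_eq, mem_coe, mem_product, mem_compl] at hp hq
      rw [Sym2.eq_iff] at hpq
      rcases hpq with ⟨h1, h2⟩ | ⟨h1, h2⟩
      · exact Prod.ext h1 h2
      · exact absurd (h1 ▸ hp.1.1) hq.1.2
  have hDeq : D = A.biUnion (fun u => (Aᶜ.filter (G.Adj u)).image (Prod.mk u)) := by
    ext p
    simp only [hD, mem_filter, mem_product, mem_biUnion, mem_image, mem_compl, Prod.mk.injEq]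
    constructor
    · rintro ⟨⟨h1, h2⟩, h3⟩; exact ⟨p.1, h1, p.2, ⟨h2, h3⟩, rfl⟩
    · rintro ⟨u, hu, v, ⟨hv, ha⟩, rfl, rfl⟩; exact ⟨⟨hu, hv⟩, ha⟩
  have hDcard : D.card = ∑ u ∈ A, (Aᶜ.filter (G.Adj u)).card := by
    rw [hDeq, Finset.card_biUnion]
    · refine Finset.sum_congr rfl fun u _ => ?_
      exact Finset.card_image_of_injective _ fun a b h => (Prod.mk.injEq _ _ _ _ ▸ h).2
    · intro x hx y hy hxy
      simp only [Finset.disjoint_left, mem_image]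
      rintro p ⟨v, _, rfl⟩ ⟨w, _, h⟩
      exact hxy ((Prod.mk.injEq _ _ _ _ ▸ h).1.symm)
  set k := A.card with hk
  have hk1 : 1 ≤ k := Finset.card_pos.mpr hA
  by_cases hkδ : δ ≤ k
  · calc δ ≤ k := hkδ
      _ = ∑ _u ∈ A, 1 := by simp [hk]
      _ ≤ ∑ u ∈ A, (Aᶜ.filter (G.Adj u)).card := by
          refine Finset.sum_le_sum fun u hu => ?_
          obtain ⟨v, hv, ha⟩ := hall u hu
          exact Finset.card_pos.mpr ⟨v, mem_filter.mpr ⟨mem_compl.mpr hv, ha⟩⟩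
      _ = D.card := hDcard.symm
      _ ≤ S.card := hDS
  · push_neg at hkδ
    have hterm : ∀ u ∈ A, δ - k + 1 ≤ (Aᶜ.filter (G.Adj u)).card := by
      intro u hu
      have hdeg' : G.degree u = (A.filter (G.Adj u)).card + (Aᶜ.filter (G.Adj u)).card := by
        rw [← Finset.card_union_of_disjoint (Finset.disjoint_filter_filter (disjoint_compl_right)),
          ← Finset.filter_union, Finset.union_compl]
        rw [SimpleGraph.degree, SimpleGraph.neighborFinset_eq_filter]
      have hAu : (A.filter (G.Adj u)).card ≤ k - 1 := by
        refine le_trans (Finset.card_le_card ?_) (le_of_eq (Finset.card_erase_of_mem hu))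
        intro v hv
        rw [mem_filter] at hv
        exact Finset.mem_erase.mpr ⟨(G.ne_of_adj hv.2).symm, hv.1⟩
      have := hdeg u
      omega
    have hsum : k * (δ - k + 1) ≤ D.card := by
      rw [hDcard]
      calc k * (δ - k + 1) = ∑ _u ∈ A, (δ - k + 1) := by simp [hk, mul_comm]
        _ ≤ _ := Finset.sum_le_sum hterm
    have : δ ≤ k * (δ - k + 1) := by
      have h := Nat.le_mul_of_pos_left (δ - k) hk1
      calc δ = (δ - k) + k := by omega
        _ ≤ k * (δ - k) + k := by omega
        _ = k * (δ - k + 1) := by ring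
    omega

lemma plesnik {V : Type*} [Fintype V] [DecidableEq V] [Nonempty V] (G : SimpleGraph V)
    [DecidableRel G.Adj] (δ : ℕ) (hdeg : ∀ v, δ ≤ G.degree v)
    (hdiam : ∀ x y : V, x ≠ y → G.Adj x y ∨ ∃ z, G.Adj x z ∧ G.Adj y z)
    (S : Finset (Sym2 V)) (hS : S.card < δ) : (G.deleteEdges ↑S).Connected := by
  classical
  rw [SimpleGraph.connected_iff]
  refine ⟨fun a b => ?_, inferInstance⟩
  by_contra hab
  set H := G.deleteEdges (↑S : Set (Sym2 V)) with hH
  set A : Finset V := univ.filter (fun v => H.Reachable a v) with hA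
  have haA : a ∈ A := mem_filter.mpr ⟨mem_univ _, SimpleGraph.Reachable.refl a⟩
  have hbA : b ∉ A := fun h => hab (mem_filter.mp h).2
  have hmemA : ∀ v, v ∈ A ↔ H.Reachable a v := by
    intro v; simp [hA]
  have hcross : ∀ u v, u ∈ A → v ∉ A → G.Adj u v → s(u, v) ∈ S := by
    intro u v hu hv hadj
    by_contra h
    have : H.Adj u v := by
      rw [hH, SimpleGraph.deleteEdges_adj]
      exact ⟨hadj, h⟩
    exact hv ((hmemA v).mpr (((hmemA u).mp hu).trans this.reachable))
  by_cases h₁ : ∀ u ∈ A, ∃ v, v ∉ A ∧ G.Adj u v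
  · exact absurd (cross_card_bound G δ hdeg A ⟨a, haA⟩ S hcross h₁) (by omega)
  · push_neg at h₁
    obtain ⟨a', ha'A, ha'⟩ := h₁
    by_cases h₂ : ∀ u ∈ Aᶜ, ∃ v, v ∉ Aᶜ ∧ G.Adj u v
    · have hcross' : ∀ u v, u ∈ Aᶜ → v ∉ Aᶜ → G.Adj u v → s(u, v) ∈ S := by
        intro u v hu hv hadj
        rw [Sym2.eq_swap]
        exact hcross v u (by simpa using hv) (by simpa using hu) hadj.symm
      exact absurd (cross_card_bound G δ hdeg Aᶜ ⟨b, mem_compl.mpr hbA⟩ S hcross' h₂) (by omega)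
    · push_neg at h₂
      obtain ⟨b', hb'A, hb'⟩ := h₂
      rw [mem_compl] at hb'A
      have hne : a' ≠ b' := fun h => hb'A (h ▸ ha'A)
      rcases hdiam a' b' hne with hadj | ⟨z, hz1, hz2⟩
      · exact ha' b' hb'A hadj
      · by_cases hzA : z ∈ A
        · exact hb' z (by simpa using hzA) hz2
        · exact ha' z hzA hz1

lemma unitGraph_degree (n : ℕ) [NeZero n] [DecidableRel (unitGraph n).Adj]
    (h2 : IsUnit (2 : ZMod n)) (v : ZMod n) :
    (unitGraph n).degree v = if IsUnit v then n.totient - 1 else n.totient := by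
  classical
  have hnf : (unitGraph n).neighborFinset v
      = (univ.filter (fun y : ZMod n => IsUnit (v + y))).erase v := by
    ext y
    simp only [SimpleGraph.mem_neighborFinset, mem_erase, mem_filter, mem_univ, true_and]
    constructor
    · rintro ⟨h1, h3⟩; exact ⟨h1.symm, h3⟩
    · rintro ⟨h1, h3⟩; exact ⟨h1.symm, h3⟩
  have hvv : IsUnit (v + v) ↔ IsUnit v := by
    rw [← two_mul]
    constructor
    · intro h; exact (isUnit_of_mul_isUnit_right h)
    · intro h; exact h2.mul h
  rw [SimpleGraph.degree, hnf]
  by_cases hv : IsUnit v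
  · have hmem : v ∈ univ.filter (fun y : ZMod n => IsUnit (v + y)) :=
      mem_filter.mpr ⟨mem_univ _, hvv.mpr hv⟩
    rw [Finset.card_erase_of_mem hmem, card_filter_unit_add n v, if_pos hv]
  · rw [Finset.erase_eq_of_notMem, card_filter_unit_add n v, if_neg hv]
    intro h
    exact hv (hvv.mp (mem_filter.mp h).2)

theorem unitGraph_twoOddPrimes_card_edges_minDegree_edgeConnectivity (p₁ p₂ n₁ n₂ : ℕ)
    (hp₁ : p₁.Prime) (hp₂ : p₂.Prime) (hodd₁ : Odd p₁) (hodd₂ : Odd p₂)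
    (hne : p₁ ≠ p₂) (hn₁ : 0 < n₁) (hn₂ : 0 < n₂) :
    Nat.card (ZMod (p₁ ^ n₁ * p₂ ^ n₂)) = p₁ ^ n₁ * p₂ ^ n₂ ∧
    (unitGraph (p₁ ^ n₁ * p₂ ^ n₂)).edgeSet.ncard =
      (p₁ ^ n₁ * p₂ ^ n₂ - 1) * Nat.totient (p₁ ^ n₁ * p₂ ^ n₂) / 2 ∧
    IsLeast (Set.range fun v : ZMod (p₁ ^ n₁ * p₂ ^ n₂) =>
        ((unitGraph (p₁ ^ n₁ * p₂ ^ n₂)).neighborSet v).ncard)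
      (Nat.totient (p₁ ^ n₁ * p₂ ^ n₂) - 1) ∧
    ((∃ S : Finset (Sym2 (ZMod (p₁ ^ n₁ * p₂ ^ n₂))), ↑S ⊆ (unitGraph (p₁ ^ n₁ * p₂ ^ n₂)).edgeSet ∧
         S.card = Nat.totient (p₁ ^ n₁ * p₂ ^ n₂) - 1 ∧ ¬((unitGraph (p₁ ^ n₁ * p₂ ^ n₂)).deleteEdges ↑S).Connected) ∧
     (∀ S : Finset (Sym2 (ZMod (p₁ ^ n₁ * p₂ ^ n₂))), ↑S ⊆ (unitGraph (p₁ ^ n₁ * p₂ ^ n₂)).edgeSet →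
         S.card < Nat.totient (p₁ ^ n₁ * p₂ ^ n₂) - 1 → ((unitGraph (p₁ ^ n₁ * p₂ ^ n₂)).deleteEdges ↑S).Connected)) := by
  classical
  set n : ℕ := p₁ ^ n₁ * p₂ ^ n₂ with hndef
  -- basic numerology
  have hp1_2 : p₁ ≠ 2 := by rintro rfl; exact (Nat.not_odd_iff_even.mpr even_two) hodd₁
  have hp2_2 : p₂ ≠ 2 := by rintro rfl; exact (Nat.not_odd_iff_even.mpr even_two) hodd₂
  have hp1_3 : 3 ≤ p₁ := by have := hp₁.two_le; omega
  have hp2_3 : 3 ≤ p₂ := by have := hp₂.two_le; omega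
  have hq1pos : 0 < p₁ ^ n₁ := pow_pos hp₁.pos _
  have hq2pos : 0 < p₂ ^ n₂ := pow_pos hp₂.pos _
  have hnpos : 0 < n := Nat.mul_pos hq1pos hq2pos
  have hn9 : 9 ≤ n := by
    have h1 : 3 ≤ p₁ ^ n₁ := le_trans hp1_3 (Nat.le_self_pow (by omega) _)
    have h2 : 3 ≤ p₂ ^ n₂ := le_trans hp2_3 (Nat.le_self_pow (by omega) _)
    calc 9 = 3 * 3 := rfl
    _ ≤ p₁ ^ n₁ * p₂ ^ n₂ := Nat.mul_le_mul h1 h2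
  haveI : NeZero n := ⟨by omega⟩
  haveI : Fact (1 < n) := ⟨by omega⟩
  have hoddn : Odd n := (hodd₁.pow).mul (hodd₂.pow)
  have h2u : IsUnit (2 : ZMod n) := by
    have := (ZMod.isUnit_iff_coprime 2 n).mpr (Nat.coprime_two_left.mpr hoddn)
    simpa using this
  have hcop : Nat.Coprime (p₁ ^ n₁) (p₂ ^ n₂) :=
    Nat.Coprime.pow _ _ ((Nat.coprime_primes hp₁ hp₂).mpr hne)
  have hφeq : n.totient = p₁ ^ (n₁ - 1) * (p₁ - 1) * (p₂ ^ (n₂ - 1) * (p₂ - 1)) := by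
    rw [hndef, Nat.totient_mul hcop, Nat.totient_prime_pow hp₁ hn₁, Nat.totient_prime_pow hp₂ hn₂]
  have hkey : n < 2 * n.totient := by
    have core : p₁ * p₂ < 2 * ((p₁ - 1) * (p₂ - 1)) := by
      obtain ⟨a, rfl⟩ := hodd₁
      obtain ⟨b, rfl⟩ := hodd₂
      have ha : 1 ≤ a := by omega
      have hb : 1 ≤ b := by omega
      have h5 : 2 ≤ a ∨ 2 ≤ b := by omega
      simp only [Nat.add_sub_cancel]
      rcases h5 with h | h <;> nlinarith
    have hneq : n = p₁ ^ (n₁ - 1) * p₂ ^ (n₂ - 1) * (p₁ * p₂) := by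
      rw [hndef]
      conv_lhs => rw [← Nat.sub_add_cancel hn₁, ← Nat.sub_add_cancel hn₂]
      ring
    have h2φ : 2 * n.totient = p₁ ^ (n₁ - 1) * p₂ ^ (n₂ - 1) * (2 * ((p₁ - 1) * (p₂ - 1))) := by
      rw [hφeq]; ring
    rw [h2φ, hneq]
    exact (Nat.mul_lt_mul_left (Nat.mul_pos (pow_pos hp₁.pos _) (pow_pos hp₂.pos _))).mpr core
  have hφ1 : 1 ≤ n.totient := Nat.totient_pos.mpr hnpos
  have hφn : n.totient ≤ n := Nat.totient_le n
  letI : DecidableRel (unitGraph n).Adj := Classical.decRel _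
  have hdeg : ∀ v : ZMod n, (unitGraph n).degree v
      = if IsUnit v then n.totient - 1 else n.totient := unitGraph_degree n h2u
  have hdeg_ge : ∀ v : ZMod n, n.totient - 1 ≤ (unitGraph n).degree v := by
    intro v; rw [hdeg v]; split <;> omega
  have hncard_deg : ∀ v : ZMod n, ((unitGraph n).neighborSet v).ncard = (unitGraph n).degree v := by
    intro v
    rw [SimpleGraph.degree, SimpleGraph.neighborFinset, Set.ncard_eq_toFinset_card']
  -- diameter ≤ 2
  have hdiam : ∀ x y : ZMod n, x ≠ y → (unitGraph n).Adj x y ∨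
      ∃ z, (unitGraph n).Adj x z ∧ (unitGraph n).Adj y z := by
    intro x y hxy
    have hP : (univ.filter (fun z : ZMod n => IsUnit (x + z))).card = n.totient :=
      card_filter_unit_add n x
    have hQ : (univ.filter (fun z : ZMod n => IsUnit (y + z))).card = n.totient :=
      card_filter_unit_add n y
    have hun : (univ.filter (fun z : ZMod n => IsUnit (x + z))
        ∪ univ.filter (fun z : ZMod n => IsUnit (y + z))).card ≤ n := by
      refine le_trans (Finset.card_le_univ _) ?_
      exact le_of_eq (ZMod.card n)
    have hiu := Finset.card_inter_add_card_union
      (univ.filter (fun z : ZMod n => IsUnit (x + z)))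
      (univ.filter (fun z : ZMod n => IsUnit (y + z)))
    have hpos : 0 < (univ.filter (fun z : ZMod n => IsUnit (x + z))
        ∩ univ.filter (fun z : ZMod n => IsUnit (y + z))).card := by omega
    obtain ⟨z, hz⟩ := Finset.card_pos.mp hpos
    rw [Finset.mem_inter, mem_filter, mem_filter] at hz
    obtain ⟨⟨_, hzx⟩, ⟨_, hzy⟩⟩ := hz
    by_cases hz1 : z = x
    · subst hz1
      exact Or.inl ⟨hxy, by rwa [add_comm] at hzy⟩
    · by_cases hz2 : z = y
      · subst hz2
        exact Or.inl ⟨hxy, hzx⟩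
      · exact Or.inr ⟨z, ⟨Ne.symm hz1, hzx⟩, ⟨Ne.symm hz2, hzy⟩⟩
  refine ⟨Nat.card_zmod n, ?_, ?_, ?_, ?_⟩
  · -- edge count
    have hsum : ∑ v : ZMod n, (unitGraph n).degree v = (n - 1) * n.totient := by
      rw [Finset.sum_congr rfl (fun v _ => hdeg v), Finset.sum_ite, Finset.sum_const,
        Finset.sum_const, smul_eq_mul, smul_eq_mul]
      have hcard1 : (univ.filter (fun v : ZMod n => IsUnit v)).card = n.totient :=
        card_filter_isUnit n
      have hsplit := Finset.card_filter_add_card_filter_not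
        (s := (univ : Finset (ZMod n))) (p := fun v : ZMod n => IsUnit v)
      rw [Finset.card_univ, ZMod.card] at hsplit
      have hcard2 : (univ.filter (fun v : ZMod n => ¬IsUnit v)).card = n - n.totient := by
        omega
      rw [hcard1, hcard2]
      zify [hφ1, hφn, show 1 ≤ n by omega]
      ring
    have hhs := (unitGraph n).sum_degrees_eq_twice_card_edges
    rw [hsum] at hhs
    rw [← SimpleGraph.coe_edgeFinset, Set.ncard_coe_finset]
    omega
  · -- IsLeast
    constructor
    · refine ⟨(1 : ZMod n), ?_⟩
      show ((unitGraph n).neighborSet 1).ncard = n.totient - 1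
      rw [hncard_deg, hdeg, if_pos isUnit_one]
    · rintro x ⟨v, rfl⟩
      show n.totient - 1 ≤ ((unitGraph n).neighborSet v).ncard
      rw [hncard_deg]
      exact hdeg_ge v
  · -- cut of size φ - 1
    refine ⟨(unitGraph n).incidenceFinset 1, ?_, ?_, ?_⟩
    · rw [SimpleGraph.incidenceFinset, Set.coe_toFinset]
      exact (unitGraph n).incidenceSet_subset 1
    · rw [SimpleGraph.card_incidenceFinset_eq_degree, hdeg, if_pos isUnit_one]
    · intro hc
      have h10 : (1 : ZMod n) ≠ 0 := one_ne_zero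
      obtain ⟨w⟩ := hc.preconnected 1 0
      have hnil : ¬w.Nil := SimpleGraph.Walk.not_nil_of_ne h10
      have hadj := w.adj_snd hnil
      rw [SimpleGraph.deleteEdges_adj] at hadj
      apply hadj.2
      rw [Finset.mem_coe, SimpleGraph.mem_incidenceFinset]
      exact (unitGraph n).mk'_mem_incidenceSet_left_iff.mpr hadj.1
  · -- lower bound on edge connectivity
    intro S _ hScard
    exact plesnik (unitGraph n) (n.totient - 1) hdeg_ge hdiam S hScard
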